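/- Let 𝒜 be a canonical collection in which every residue set T_i consists of consecutive integers (i.e. T_i is an interval of b_i consecutive integers containing 0). Then 𝒜 is complete (an additive system for ℤ) if and only if max(T_i) > 0 for infinitely many i and min(T_i) < 0 for infinitely many i. -/
import Mathlib


/-- `prodBases b i = b 0 * b 1 * ⋯ * b (i-1)`. -/
def prodBases (b : ℕ → ℤ) (i : ℕ) : ℤ := ∏ j ∈ Finset.range i, b j

/-- The member sets `A i = (b 0 ⋯ b (i-1)) • T i` of a canonical collection. -/
def memberSet (b : ℕ → ℤ) (T : ℕ → Set ℤ) (i : ℕ) : Set ℤ :=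
  (fun t => prodBases b i * t) '' T i

/-- `T` is a complete residue system modulo `m` containing `0`. -/
def IsCompleteResidueSystem (m : ℤ) (T : Set ℤ) : Prop :=
  0 ∈ T ∧ ∀ r : ℤ, ∃! t, t ∈ T ∧ t ≡ r [ZMOD m]

/-- `a` is a representation of `n` in the collection `A`. -/
def IsRepr (A : ℕ → Set ℤ) (n : ℤ) (a : ℕ → ℤ) : Prop :=
  (∀ i, a i ∈ A i) ∧ (Function.support a).Finite ∧ n = ∑ᶠ i, a i

namespace AddSysAux

variable (b : ℕ → ℤ) (T : ℕ → Set ℤ)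

lemma prod_pos (hb : ∀ i, 1 < b i) (k : ℕ) : 0 < prodBases b k :=
  Finset.prod_pos fun j _ => lt_trans one_pos (hb j)

lemma prod_succ (k : ℕ) : prodBases b (k + 1) = prodBases b k * b k :=
  Finset.prod_range_succ _ _

lemma prod_dvd {k i : ℕ} (h : k ≤ i) : prodBases b k ∣ prodBases b i := by
  obtain ⟨m, rfl⟩ := Nat.exists_eq_add_of_le h
  unfold prodBases
  rw [Finset.prod_range_add]
  exact Dvd.intro _ rfl

variable (hT : ∀ i, IsCompleteResidueSystem (b i) (T i))

/-- the unique element of `T i` congruent to `r` mod `b i`. -/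
noncomputable def res (i : ℕ) (r : ℤ) : ℤ := ((hT i).2 r).choose

lemma res_mem (i : ℕ) (r : ℤ) : res b T hT i r ∈ T i :=
  ((hT i).2 r).choose_spec.1.1

lemma res_modeq (i : ℕ) (r : ℤ) : res b T hT i r ≡ r [ZMOD b i] :=
  ((hT i).2 r).choose_spec.1.2

lemma res_unique {i : ℕ} {r t : ℤ} (ht : t ∈ T i) (hc : t ≡ r [ZMOD b i]) :
    t = res b T hT i r :=
  ((hT i).2 r).choose_spec.2 t ⟨ht, hc⟩

lemma res_zero (i : ℕ) : res b T hT i 0 = 0 :=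
  (res_unique b T hT (hT i).1 (Int.ModEq.refl 0)).symm

lemma dvd_sub_res (i : ℕ) (r : ℤ) : b i ∣ r - res b T hT i r :=
  (res_modeq b T hT i r).dvd

/-- one greedy step at stage `i`. -/
noncomputable def step (i : ℕ) (r : ℤ) : ℤ := (r - res b T hT i r) / b i

lemma step_spec (i : ℕ) (r : ℤ) : b i * step b T hT i r = r - res b T hT i r :=
  Int.mul_ediv_cancel' (dvd_sub_res b T hT i r)

lemma step_zero (i : ℕ) : step b T hT i 0 = 0 := by
  unfold step
  rw [res_zero]
  simp

variable (hb : ∀ i, 1 < b i) (hcons : ∀ i, ∃ lo : ℤ, T i = Set.Icc lo (lo + b i - 1))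

include hT hcons in
lemma mem_le {i : ℕ} {t : ℤ} (ht : t ∈ T i) : t ≤ b i - 1 := by
  obtain ⟨lo, hlo⟩ := hcons i
  have h0 : (0 : ℤ) ∈ T i := (hT i).1
  rw [hlo] at ht h0
  have := h0.1; have := ht.2; linarith

include hT hcons in
lemma mem_ge {i : ℕ} {t : ℤ} (ht : t ∈ T i) : 1 - b i ≤ t := by
  obtain ⟨lo, hlo⟩ := hcons i
  have h0 : (0 : ℤ) ∈ T i := (hT i).1
  rw [hlo] at ht h0
  have := h0.2; have := ht.1; linarith

include hT hb hcons in
lemma step_nonneg {i : ℕ} {r : ℤ} (hr : 0 ≤ r) : 0 ≤ step b T hT i r := by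
  have hs := step_spec b T hT i r
  have h1 := mem_le b T hT hcons (res_mem b T hT i r)
  have hbi := hb i
  by_contra h
  push_neg at h
  have h2 : step b T hT i r ≤ -1 := by omega
  have : b i * step b T hT i r ≤ b i * (-1) :=
    mul_le_mul_of_nonneg_left h2 (by omega)
  linarith

include hT hb hcons in
lemma step_le {i : ℕ} {r : ℤ} (hr : 0 ≤ r) : step b T hT i r ≤ r := by
  have hs := step_spec b T hT i r
  have h1 := mem_ge b T hT hcons (res_mem b T hT i r)
  have hbi := hb i
  by_contra h
  push_neg at h
  have h2 : r + 1 ≤ step b T hT i r := by omega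
  have : b i * (r + 1) ≤ b i * step b T hT i r :=
    mul_le_mul_of_nonneg_left h2 (by omega)
  nlinarith

include hT hb hcons in
lemma step_lt {i : ℕ} {r : ℤ} (hr : 2 ≤ r) : step b T hT i r < r := by
  have hs := step_spec b T hT i r
  have h1 := mem_ge b T hT hcons (res_mem b T hT i r)
  have hbi := hb i
  by_contra h
  push_neg at h
  have : b i * r ≤ b i * step b T hT i r :=
    mul_le_mul_of_nonneg_left h (by omega)
  nlinarith

include hT hcons in
lemma step_one {i : ℕ} (hpos : ∃ t ∈ T i, 0 < t) : step b T hT i 1 = 0 := by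
  obtain ⟨t, ht, htpos⟩ := hpos
  obtain ⟨lo, hlo⟩ := hcons i
  have h0 : (0 : ℤ) ∈ T i := (hT i).1
  have h1 : (1 : ℤ) ∈ T i := by
    rw [hlo] at ht h0 ⊢
    constructor
    · have := h0.1; omega
    · have := ht.2; omega
  have : (1 : ℤ) = res b T hT i 1 := res_unique b T hT h1 (Int.ModEq.refl 1)
  unfold step
  rw [← this]
  simp

include hT hb hcons in
lemma step_nonpos {i : ℕ} {r : ℤ} (hr : r ≤ 0) : step b T hT i r ≤ 0 := by
  have hs := step_spec b T hT i r
  have h1 := mem_ge b T hT hcons (res_mem b T hT i r)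
  have hbi := hb i
  by_contra h
  push_neg at h
  have h2 : 1 ≤ step b T hT i r := by omega
  have : b i * 1 ≤ b i * step b T hT i r :=
    mul_le_mul_of_nonneg_left h2 (by omega)
  linarith

include hT hb hcons in
lemma step_ge {i : ℕ} {r : ℤ} (hr : r ≤ 0) : r ≤ step b T hT i r := by
  have hs := step_spec b T hT i r
  have h1 := mem_le b T hT hcons (res_mem b T hT i r)
  have hbi := hb i
  by_contra h
  push_neg at h
  have h2 : step b T hT i r ≤ r - 1 := by omega
  have : b i * step b T hT i r ≤ b i * (r - 1) :=
    mul_le_mul_of_nonneg_left h2 (by omega)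
  nlinarith

include hT hb hcons in
lemma step_gt {i : ℕ} {r : ℤ} (hr : r ≤ -2) : r < step b T hT i r := by
  have hs := step_spec b T hT i r
  have h1 := mem_le b T hT hcons (res_mem b T hT i r)
  have hbi := hb i
  by_contra h
  push_neg at h
  have : b i * step b T hT i r ≤ b i * r :=
    mul_le_mul_of_nonneg_left h (by omega)
  nlinarith

include hT hcons in
lemma step_neg_one {i : ℕ} (hneg : ∃ t ∈ T i, t < 0) : step b T hT i (-1) = 0 := by
  obtain ⟨t, ht, htneg⟩ := hneg
  obtain ⟨lo, hlo⟩ := hcons i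
  have h0 : (0 : ℤ) ∈ T i := (hT i).1
  have h1 : (-1 : ℤ) ∈ T i := by
    rw [hlo] at ht h0 ⊢
    constructor
    · have := ht.1; omega
    · have := h0.2; omega
  have : (-1 : ℤ) = res b T hT i (-1) := res_unique b T hT h1 (Int.ModEq.refl _)
  unfold step
  rw [← this]
  simp

/-- the greedy remainder sequence starting at stage `k` with value `n`. -/
noncomputable def g (k : ℕ) (n : ℤ) : ℕ → ℤ
  | 0 => n
  | j + 1 => step b T hT (k + j) (g k n j)

lemma g_shift (k : ℕ) (n : ℤ) (j : ℕ) :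
    g b T hT k n (j + 1) = g b T hT (k + 1) (step b T hT k n) j := by
  induction j with
  | zero => simp [g]
  | succ j ih =>
      show step b T hT (k + (j + 1)) (g b T hT k n (j + 1)) = _
      rw [ih]
      have : k + (j + 1) = (k + 1) + j := by omega
      rw [this]
      rfl

lemma g_zero_stable (k : ℕ) (n : ℤ) {j : ℕ} (hj : g b T hT k n j = 0) :
    ∀ j', j ≤ j' → g b T hT k n j' = 0 := by
  intro j' hjj
  obtain ⟨m, rfl⟩ := Nat.exists_eq_add_of_le hjj
  induction m with
  | zero => exact hj
  | succ m ih =>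
      show step b T hT _ (g b T hT k n (j + m)) = 0
      rw [ih (by omega)]
      exact step_zero b T hT _

lemma exists_ge_of_infinite {S : Set ℕ} (hS : S.Infinite) (k : ℕ) :
    ∃ i ∈ S, k ≤ i := by
  obtain ⟨i, hi, hki⟩ := hS.exists_gt k
  exact ⟨i, hi, le_of_lt hki⟩

include hb hcons in
lemma terminates
    (hpos : {i : ℕ | ∃ t ∈ T i, 0 < t}.Infinite)
    (hneg : {i : ℕ | ∃ t ∈ T i, t < 0}.Infinite) :
    ∀ n : ℤ, ∀ k : ℕ, ∃ j, g b T hT k n j = 0 := by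
  have H : ∀ m : ℕ, ∀ n : ℤ, n.natAbs ≤ m → ∀ k : ℕ, ∃ j, g b T hT k n j = 0 := by
    intro m
    induction m with
    | zero =>
        intro n hn k
        have : n = 0 := by omega
        exact ⟨0, this⟩
    | succ m ih =>
        intro n hn k
        rcases le_or_gt n.natAbs m with h | h
        · exact ih n h k
        · -- n.natAbs = m + 1
          rcases lt_trichotomy n 0 with hneg0 | h0 | hpos0
          · -- n < 0
            rcases eq_or_lt_of_le (show n ≤ -1 by omega) with h1 | h2
            · -- n = -1
              have hall : ∀ j, g b T hT k n j = 0 ∨ g b T hT k n j = -1 := by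
                intro j
                induction j with
                | zero => right; show n = -1; omega
                | succ j ihj =>
                    rcases ihj with hz | ho
                    · left
                      show step b T hT _ (g b T hT k n j) = 0
                      rw [hz]; exact step_zero b T hT _
                    · show step b T hT (k + j) (g b T hT k n j) = 0 ∨
                        step b T hT (k + j) (g b T hT k n j) = -1
                      rw [ho]
                      have hle := step_nonpos b T hT hb hcons (i := k + j)
                        (r := (-1 : ℤ)) (by omega)
                      have hge := step_ge b T hT hb hcons (i := k + j)
                        (r := (-1 : ℤ)) (by omega)
                      omega
              obtain ⟨i, hiS, hki⟩ := exists_ge_of_infinite hneg k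
              rcases hall (i - k) with hz | ho
              · exact ⟨i - k, hz⟩
              · refine ⟨i - k + 1, ?_⟩
                show step b T hT (k + (i - k)) (g b T hT k n (i - k)) = 0
                rw [ho]
                have : k + (i - k) = i := by omega
                rw [this]
                exact step_neg_one b T hT hcons hiS
            · -- n ≤ -2
              have hlt := step_gt b T hT hb hcons (i := k) (r := n) (by omega)
              have hle := step_nonpos b T hT hb hcons (i := k) (r := n) (by omega)
              obtain ⟨j, hj⟩ := ih (step b T hT k n) (by omega) (k + 1)
              exact ⟨j + 1, by rw [g_shift]; exact hj⟩
          · exact ⟨0, h0⟩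
          · -- n > 0
            rcases eq_or_lt_of_le (show 1 ≤ n by omega) with h1 | h2
            · -- n = 1
              have hall : ∀ j, g b T hT k n j = 0 ∨ g b T hT k n j = 1 := by
                intro j
                induction j with
                | zero => right; show n = 1; omega
                | succ j ihj =>
                    rcases ihj with hz | ho
                    · left
                      show step b T hT _ (g b T hT k n j) = 0
                      rw [hz]; exact step_zero b T hT _
                    · show step b T hT (k + j) (g b T hT k n j) = 0 ∨
                        step b T hT (k + j) (g b T hT k n j) = 1
                      rw [ho]
                      have hle := step_le b T hT hb hcons (i := k + j)
                        (r := (1 : ℤ)) (by omega)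
                      have hge := step_nonneg b T hT hb hcons (i := k + j)
                        (r := (1 : ℤ)) (by omega)
                      omega
              obtain ⟨i, hiS, hki⟩ := exists_ge_of_infinite hpos k
              rcases hall (i - k) with hz | ho
              · exact ⟨i - k, hz⟩
              · refine ⟨i - k + 1, ?_⟩
                show step b T hT (k + (i - k)) (g b T hT k n (i - k)) = 0
                rw [ho]
                have : k + (i - k) = i := by omega
                rw [this]
                exact step_one b T hT hcons hiS
            · -- n ≥ 2
              have hlt := step_lt b T hT hb hcons (i := k) (r := n) (by omega)
              have hge := step_nonneg b T hT hb hcons (i := k) (r := n) (by omega)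
              obtain ⟨j, hj⟩ := ih (step b T hT k n) (by omega) (k + 1)
              exact ⟨j + 1, by rw [g_shift]; exact hj⟩
  exact fun n k => H n.natAbs n le_rfl k

/-- the greedy representation of `n`. -/
noncomputable def greedyRep (n : ℤ) (i : ℕ) : ℤ :=
  prodBases b i * res b T hT i (g b T hT 0 n i)

lemma g_partial (n : ℤ) :
    ∀ k, n = (∑ i ∈ Finset.range k, greedyRep b T hT n i)
      + prodBases b k * g b T hT 0 n k := by
  intro k
  induction k with
  | zero => simp [prodBases, g]
  | succ k ih =>
      rw [Finset.sum_range_succ]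
      have hg : g b T hT 0 n (k + 1) = step b T hT k (g b T hT 0 n k) := by
        show step b T hT (0 + k) _ = _
        rw [Nat.zero_add]
      rw [hg, prod_succ]
      have hs := step_spec b T hT k (g b T hT 0 n k)
      conv_lhs => rw [ih]
      unfold greedyRep
      linear_combination (-(prodBases b k)) * hs

include hb hcons in
lemma exists_repr
    (hpos : {i : ℕ | ∃ t ∈ T i, 0 < t}.Infinite)
    (hneg : {i : ℕ | ∃ t ∈ T i, t < 0}.Infinite) (n : ℤ) :
    IsRepr (memberSet b T) n (greedyRep b T hT n) := by
  obtain ⟨j, hj⟩ := terminates b T hT hb hcons hpos hneg n 0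
  have hzero : ∀ i, j ≤ i → greedyRep b T hT n i = 0 := by
    intro i hji
    unfold greedyRep
    rw [g_zero_stable b T hT 0 n hj i hji, res_zero]
    ring
  have hsupp : Function.support (greedyRep b T hT n) ⊆ ↑(Finset.range j) := by
    intro i hi
    simp only [Finset.coe_range, Set.mem_Iio]
    by_contra h
    exact hi (hzero i (by omega))
  refine ⟨fun i => ⟨res b T hT i (g b T hT 0 n i), res_mem b T hT i _, rfl⟩,
    Set.Finite.subset (Finset.range j).finite_toSet hsupp, ?_⟩
  rw [finsum_eq_sum_of_support_subset _ hsupp]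
  have := g_partial b T hT n j
  rw [hj] at this
  simpa using this

lemma repr_dvd {n : ℤ} {a : ℕ → ℤ} (ha : IsRepr (memberSet b T) n a) (k : ℕ) :
    prodBases b k ∣ n - ∑ i ∈ Finset.range k, a i := by
  classical
  set s : Finset ℕ := ha.2.1.toFinset ∪ Finset.range k with hs
  have hsub : Function.support a ⊆ ↑s := by
    intro i hi
    simp [hs, Set.Finite.mem_toFinset, hi]
  have hsum : n = ∑ i ∈ s, a i := by
    rw [ha.2.2]
    exact finsum_eq_sum_of_support_subset _ hsub
  have hrs : Finset.range k ⊆ s := Finset.subset_union_right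
  have hsd : ∑ i ∈ s \ Finset.range k, a i + ∑ i ∈ Finset.range k, a i = ∑ i ∈ s, a i :=
    Finset.sum_sdiff hrs
  have : n - ∑ i ∈ Finset.range k, a i = ∑ i ∈ s \ Finset.range k, a i := by
    rw [hsum]; linarith
  rw [this]
  refine Finset.dvd_sum fun i hi => ?_
  have hki : k ≤ i := by
    have := Finset.mem_sdiff.mp hi
    simpa using this.2
  obtain ⟨t, _, hat⟩ := ha.1 i
  have hat' : a i = prodBases b i * t := hat.symm
  exact Dvd.dvd.trans (prod_dvd b hki) ⟨t, hat'⟩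

include hT hb in
lemma repr_unique {n : ℤ} {a a' : ℕ → ℤ}
    (ha : IsRepr (memberSet b T) n a) (ha' : IsRepr (memberSet b T) n a') :
    a = a' := by
  funext k
  induction k using Nat.strong_induction_on with
  | _ k ih =>
    obtain ⟨t, htm, hat0⟩ := ha.1 k
    obtain ⟨t', htm', hat0'⟩ := ha'.1 k
    have hat : a k = prodBases b k * t := hat0.symm
    have hat' : a' k = prodBases b k * t' := hat0'.symm
    have hd := repr_dvd b T ha (k + 1)
    have hd' := repr_dvd b T ha' (k + 1)
    have hsum : ∑ i ∈ Finset.range k, a i = ∑ i ∈ Finset.range k, a' i :=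
      Finset.sum_congr rfl fun i hi => ih i (Finset.mem_range.mp hi)
    have hdvd : prodBases b (k + 1) ∣ a' k - a k := by
      have : a' k - a k = (n - ∑ i ∈ Finset.range (k+1), a i)
          - (n - ∑ i ∈ Finset.range (k+1), a' i) := by
        rw [Finset.sum_range_succ, Finset.sum_range_succ, hsum]; ring
      rw [this]
      exact dvd_sub hd hd'
    rw [prod_succ, hat, hat'] at hdvd
    have hP := prod_pos b hb k
    have hdvd2 : b k ∣ t' - t := by
      rcases hdvd with ⟨c, hc⟩
      refine ⟨c, ?_⟩
      have : prodBases b k * (t' - t) = prodBases b k * (b k * c) := by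
        rw [mul_sub]; linarith [hc]
      exact mul_left_cancel₀ (ne_of_gt hP) this
    have ht'r : t' = res b T hT k t :=
      res_unique b T hT htm' (Int.modEq_iff_dvd.mpr (dvd_sub_comm.mp hdvd2))
    have htr : t = res b T hT k t :=
      res_unique b T hT htm (Int.ModEq.refl t)
    rw [hat, hat', ht'r, ← htr]

end AddSysAux

open AddSysAux in
/-- If every residue set `T i` of a canonical collection is an interval of `b i`
consecutive integers (containing `0`), then the collection is an additive system for `ℤ`
if and only if `max (T i) > 0` for infinitely many `i` and `min (T i) < 0` for
infinitely many `i`. -/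
theorem complete_iff_infinitely_positive_and_negative
    (b : ℕ → ℤ) (T : ℕ → Set ℤ)
    (hb : ∀ i, 1 < b i)
    (hT : ∀ i, IsCompleteResidueSystem (b i) (T i))
    (hcons : ∀ i, ∃ lo : ℤ, T i = Set.Icc lo (lo + b i - 1)) :
    (∀ n : ℤ, ∃! a : ℕ → ℤ, IsRepr (memberSet b T) n a) ↔
      ({i : ℕ | ∃ t ∈ T i, 0 < t}.Infinite ∧ {i : ℕ | ∃ t ∈ T i, t < 0}.Infinite) := by
  constructor
  · intro hcomp
    constructor
    · by_contra hfin
      rw [Set.not_infinite] at hfin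
      obtain ⟨N, hN⟩ := hfin.bddAbove
      set C : ℤ := ∑ i ∈ Finset.range (N + 1), prodBases b i * (b i - 1) with hC
      obtain ⟨a, ha, -⟩ := hcomp (C + 1)
      classical
      set s : Finset ℕ := ha.2.1.toFinset ∪ Finset.range (N + 1) with hs
      have hsub : Function.support a ⊆ ↑s := by
        intro i hi; simp [hs, Set.Finite.mem_toFinset, hi]
      have hsum : C + 1 = ∑ i ∈ s, a i := by
        rw [ha.2.2]; exact finsum_eq_sum_of_support_subset _ hsub
      have hrs : Finset.range (N + 1) ⊆ s := Finset.subset_union_right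
      have hsd : ∑ i ∈ s \ Finset.range (N+1), a i + ∑ i ∈ Finset.range (N+1), a i
          = ∑ i ∈ s, a i := Finset.sum_sdiff hrs
      have h1 : ∑ i ∈ Finset.range (N+1), a i ≤ C := by
        rw [hC]
        refine Finset.sum_le_sum fun i _ => ?_
        obtain ⟨t, htm, hat⟩ := ha.1 i
        have hat' : a i = prodBases b i * t := hat.symm
        rw [hat']
        exact mul_le_mul_of_nonneg_left
          (by linarith [mem_le b T hT hcons htm]) (le_of_lt (prod_pos b hb i))
      have h2 : ∑ i ∈ s \ Finset.range (N+1), a i ≤ 0 := by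
        refine Finset.sum_nonpos fun i hi => ?_
        have hNi : N + 1 ≤ i := by
          have := Finset.mem_sdiff.mp hi; simpa using this.2
        have hni : i ∉ {i : ℕ | ∃ t ∈ T i, 0 < t} := by
          intro hmem
          have := hN hmem; omega
        obtain ⟨t, htm, hat⟩ := ha.1 i
        have hat' : a i = prodBases b i * t := hat.symm
        have htn : t ≤ 0 := by
          by_contra h; push_neg at h; exact hni ⟨t, htm, h⟩
        rw [hat']
        exact mul_nonpos_of_nonneg_of_nonpos (le_of_lt (prod_pos b hb i)) htn
      omega
    · by_contra hfin
      rw [Set.not_infinite] at hfin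
      obtain ⟨N, hN⟩ := hfin.bddAbove
      set C : ℤ := ∑ i ∈ Finset.range (N + 1), prodBases b i * (b i - 1) with hC
      obtain ⟨a, ha, -⟩ := hcomp (-(C + 1))
      classical
      set s : Finset ℕ := ha.2.1.toFinset ∪ Finset.range (N + 1) with hs
      have hsub : Function.support a ⊆ ↑s := by
        intro i hi; simp [hs, Set.Finite.mem_toFinset, hi]
      have hsum : -(C + 1) = ∑ i ∈ s, a i := by
        rw [ha.2.2]; exact finsum_eq_sum_of_support_subset _ hsub
      have hrs : Finset.range (N + 1) ⊆ s := Finset.subset_union_right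
      have hsd : ∑ i ∈ s \ Finset.range (N+1), a i + ∑ i ∈ Finset.range (N+1), a i
          = ∑ i ∈ s, a i := Finset.sum_sdiff hrs
      have h1 : -C ≤ ∑ i ∈ Finset.range (N+1), a i := by
        rw [hC, ← Finset.sum_neg_distrib]
        refine Finset.sum_le_sum fun i _ => ?_
        obtain ⟨t, htm, hat⟩ := ha.1 i
        have hat' : a i = prodBases b i * t := hat.symm
        rw [hat']
        have : prodBases b i * (1 - b i) ≤ prodBases b i * t :=
          mul_le_mul_of_nonneg_left (mem_ge b T hT hcons htm)
            (le_of_lt (prod_pos b hb i))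
        linarith [this]
      have h2 : 0 ≤ ∑ i ∈ s \ Finset.range (N+1), a i := by
        refine Finset.sum_nonneg fun i hi => ?_
        have hNi : N + 1 ≤ i := by
          have := Finset.mem_sdiff.mp hi; simpa using this.2
        have hni : i ∉ {i : ℕ | ∃ t ∈ T i, t < 0} := by
          intro hmem
          have := hN hmem; omega
        obtain ⟨t, htm, hat⟩ := ha.1 i
        have hat' : a i = prodBases b i * t := hat.symm
        have htn : 0 ≤ t := by
          by_contra h; push_neg at h; exact hni ⟨t, htm, h⟩
        rw [hat']
        exact mul_nonneg (le_of_lt (prod_pos b hb i)) htn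
      omega
  · rintro ⟨hpos, hneg⟩ n
    refine ⟨greedyRep b T hT n, exists_repr b T hT hb hcons hpos hneg n, ?_⟩
    intro a ha
    exact repr_unique b T hT hb ha (exists_repr b T hT hb hcons hpos hneg n)
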